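/- arXiv:1910.04982 — 4 statements merged into one kernel-verified Lean document; each statement's English description precedes it below -/
import Mathlib

section
/- μ_{j,ρ} converges weakly to ν_j as ρ → 0, uniformly over j ∈ J(ρ), if and only if for every fixed bounded continuous function f : S → ℝ the integrals converge uniformly, i.e. for every ε > 0 there exists ρ₀ ∈ (0,1) such that |∫_S f dμ_{j,ρ} − ∫_S f dν_j| < ε for all ρ ∈ (0,ρ₀) and all j ∈ J(ρ). -/
open MeasureTheory Filter Topology Set Uniformity

/-!
Both sides say that a pair of families tends to the diagonal along the filter "`ρ → 0⁺`,
`j ∈ J(ρ)`": the left side in `P(S)`, the right side after each integration map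
`m ↦ ∫ f dm`, which is continuous. A continuous map is uniformly continuous near the compact
set `C`, which gives `→`. Conversely, along any ultrafilter `ν_j` converges to some `z ∈ C` by
compactness, so by the integral condition `μ_{j,ρ}` converges weakly to `z` as well, and the
two families are eventually close.
-/

section UniformSpace

variable {X ι : Type*} [UniformSpace X] {K : Set X} {l : Filter ι} {u v : ι → X}

theorem Filter.Tendsto.uniformity_comp_of_isCompact {Y : Type*} [UniformSpace Y]
    (hK : IsCompact K) {g : X → Y} (hg : Continuous g) (hv : ∀ᶠ i in l, v i ∈ K)
    (h : Tendsto (fun i => (u i, v i)) l (𝓤 X)) :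
    Tendsto (fun i => (g (u i), g (v i))) l (𝓤 Y) := by
  refine fun r hr => mem_map.2 ?_
  have hr' := hK.uniformContinuousAt_of_continuousAt g (fun a _ => hg.continuousAt)
    (symm_le_uniformity hr)
  filter_upwards [h.uniformity_symm hr', hv] with i hi hvi using hi hvi

theorem tendsto_uniformity_of_isCompact (hK : IsCompact K) (hv : ∀ᶠ i in l, v i ∈ K)
    (h : ∀ l' ≤ l, ∀ z ∈ K, Tendsto v l' (𝓝 z) → Tendsto u l' (𝓝 z)) :
    Tendsto (fun i => (u i, v i)) l (𝓤 X) := by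
  intro U hU
  by_contra hnot
  set bad := ((fun i => (u i, v i)) ⁻¹' U)ᶜ
  have : NeBot (l ⊓ 𝓟 bad) := neBot_iff.2 (mt mem_iff_inf_principal_compl.2 hnot)
  set 𝒰 := Ultrafilter.of (l ⊓ 𝓟 bad)
  have h𝒰 : ↑𝒰 ≤ l ⊓ 𝓟 bad := Ultrafilter.of_le _
  obtain ⟨z, hzK, hvz⟩ := hK.ultrafilter_le_nhds (𝒰.map v)
    (le_principal_iff.2 (h𝒰.trans inf_le_left hv))
  have huz := h 𝒰 (h𝒰.trans inf_le_left) z hzK hvz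
  have hin : ∀ᶠ i in (𝒰 : Filter ι), (u i, v i) ∈ U :=
    (huz.prodMk_nhds hvz).mono_right (nhds_le_uniformity z) hU
  have hout : ∀ᶠ i in (𝒰 : Filter ι), i ∈ bad := le_principal_iff.1 (h𝒰.trans inf_le_right)
  obtain ⟨i, hi, hi'⟩ := (hin.and hout).exists
  exact hi' hi

end UniformSpace

/-- `ρ → 0⁺` with `j ∈ J(ρ)`: convergence along this filter is convergence as `ρ → 0`
uniformly over `j ∈ J(ρ)`. -/
def nhdsGTZeroOver {J : Type*} (Jρ : ℝ → Set J) : Filter (ℝ × J) :=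
  comap Prod.fst (𝓝[>] 0) ⊓ 𝓟 {p | p.2 ∈ Jρ p.1}

section nhdsGTZeroOver

variable {J : Type*} (Jρ : ℝ → Set J)

theorem hasBasis_nhdsGTZeroOver :
    (nhdsGTZeroOver Jρ).HasBasis (· ∈ Ioo (0 : ℝ) 1)
      (fun ρ₀ => Prod.fst ⁻¹' Ioo 0 ρ₀ ∩ {p | p.2 ∈ Jρ p.1}) := by
  refine (((nhdsGT_basis (0 : ℝ)).restrict fun ρ₀ hρ₀ => ?_).comap Prod.fst).inf_principal _
  exact ⟨min ρ₀ (1 / 2), lt_min hρ₀ (by norm_num), min_lt_of_right_lt (by norm_num),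
    Ioo_subset_Ioo_right (min_le_left _ _)⟩

theorem tendsto_uniformity_nhdsGTZeroOver_iff {Y : Type*} [PseudoMetricSpace Y]
    {g h : ℝ → J → Y} :
    Tendsto (fun p => (g p.1 p.2, h p.1 p.2)) (nhdsGTZeroOver Jρ) (𝓤 Y) ↔
      ∀ ε > 0, ∃ ρ₀ ∈ Ioo (0 : ℝ) 1, ∀ ρ ∈ Ioo 0 ρ₀, ∀ j ∈ Jρ ρ, dist (g ρ j) (h ρ j) < ε := by
  rw [(hasBasis_nhdsGTZeroOver Jρ).tendsto_iff Metric.uniformity_basis_dist]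
  simp only [mem_inter_iff, mem_preimage, mem_ofPred_eq, and_imp, Prod.forall]
  exact forall₂_congr fun _ _ => exists_congr fun _ => and_congr_right fun _ =>
    ⟨fun H ρ hρ j hj => H ρ j hρ hj, fun H ρ j hρ hj => H ρ hρ j hj⟩

end nhdsGTZeroOver

theorem uniform_weak_convergence_iff_uniform_integrals_general
    {S : Type*} [TopologicalSpace S] [MeasurableSpace S] [BorelSpace S]
    {J : Type*} (Jρ : ℝ → Set J)
    (mD : MetricSpace (ProbabilityMeasure S))
    (hmD : mD.toPseudoMetricSpace.toUniformSpace.toTopologicalSpace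
      = (inferInstance : TopologicalSpace (ProbabilityMeasure S)))
    (C : Set (ProbabilityMeasure S)) (hC : IsCompact C)
    (μ : ℝ → J → ProbabilityMeasure S)
    (ν : J → ProbabilityMeasure S) (hν : ∀ j, ν j ∈ C) :
    (∀ ε > (0 : ℝ), ∃ ρ₀ ∈ Set.Ioo (0 : ℝ) 1, ∀ ρ ∈ Set.Ioo (0 : ℝ) ρ₀, ∀ j ∈ Jρ ρ,
        @dist _ mD.toPseudoMetricSpace.toDist (μ ρ j) (ν j) < ε)
    ↔ (∀ f : BoundedContinuousFunction S ℝ,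
        ∀ ε > (0 : ℝ), ∃ ρ₀ ∈ Set.Ioo (0 : ℝ) 1, ∀ ρ ∈ Set.Ioo (0 : ℝ) ρ₀, ∀ j ∈ Jρ ρ,
          |(∫ x, f x ∂((μ ρ j : Measure S))) - ∫ x, f x ∂((ν j : Measure S))| < ε) := by
  -- a copy of `mD` whose topology is definitionally the weak topology
  let _ : MetricSpace (ProbabilityMeasure S) := mD.replaceTopology hmD.symm
  have hνC : ∀ᶠ p in nhdsGTZeroOver Jρ, ν p.2 ∈ C := .of_forall fun p => hν p.2
  calc _ ↔ Tendsto (fun p => (μ p.1 p.2, ν p.2)) (nhdsGTZeroOver Jρ) (𝓤 _) :=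
        (tendsto_uniformity_nhdsGTZeroOver_iff Jρ (h := fun _ j => ν j)).symm
    _ ↔ ∀ f : BoundedContinuousFunction S ℝ, Tendsto
          (fun p => (∫ x, f x ∂(μ p.1 p.2 : Measure S), ∫ x, f x ∂(ν p.2 : Measure S)))
          (nhdsGTZeroOver Jρ) (𝓤 ℝ) := by
      refine ⟨fun h f => h.uniformity_comp_of_isCompact hC
        (ProbabilityMeasure.continuous_integral_boundedContinuousFunction f) hνC, fun h => ?_⟩
      refine tendsto_uniformity_of_isCompact hC hνC fun l hl z _ hνz => ?_
      exact ProbabilityMeasure.tendsto_iff_forall_integral_tendsto.2 fun f =>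
        (ProbabilityMeasure.tendsto_iff_forall_integral_tendsto.1 hνz f).congr_uniformity
          ((h f).mono_left hl).uniformity_symm
    _ ↔ _ := forall_congr' fun f => by
      simp only [← Real.dist_eq]
      exact tendsto_uniformity_nhdsGTZeroOver_iff Jρ
        (g := fun ρ j => ∫ x, f x ∂(μ ρ j : Measure S))
        (h := fun _ j => ∫ x, f x ∂(ν j : Measure S))

/-- Uniform weak convergence `μ_{j,ρ} → ν_j` (as `ρ → 0`, uniformly over
`j ∈ J(ρ)`) holds if and only if for every fixed bounded continuous `f : S → ℝ` the integrals
`∫ f dμ_{j,ρ}` converge to `∫ f dν_j` uniformly over `j ∈ J(ρ)` as `ρ → 0`. -/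
theorem uniform_weak_convergence_iff_uniform_integrals
    {S : Type*} [TopologicalSpace S] [TopologicalSpace.SeparableSpace S]
    [TopologicalSpace.MetrizableSpace S] [MeasurableSpace S] [BorelSpace S]
    {J : Type*} (Jρ : ℝ → Set J)
    (mD : MetricSpace (ProbabilityMeasure S))
    (hmD : mD.toPseudoMetricSpace.toUniformSpace.toTopologicalSpace
      = (inferInstance : TopologicalSpace (ProbabilityMeasure S)))
    (C : Set (ProbabilityMeasure S)) (hC : IsCompact C)
    (μ : ℝ → J → ProbabilityMeasure S)
    (ν : J → ProbabilityMeasure S) (hν : ∀ j, ν j ∈ C) :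
    (∀ ε > (0 : ℝ), ∃ ρ₀ ∈ Set.Ioo (0 : ℝ) 1, ∀ ρ ∈ Set.Ioo (0 : ℝ) ρ₀, ∀ j ∈ Jρ ρ,
        @dist _ mD.toPseudoMetricSpace.toDist (μ ρ j) (ν j) < ε)
    ↔ (∀ f : BoundedContinuousFunction S ℝ,
        ∀ ε > (0 : ℝ), ∃ ρ₀ ∈ Set.Ioo (0 : ℝ) 1, ∀ ρ ∈ Set.Ioo (0 : ℝ) ρ₀, ∀ j ∈ Jρ ρ,
          |(∫ x, f x ∂((μ ρ j : Measure S))) - ∫ x, f x ∂((ν j : Measure S))| < ε) :=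
  uniform_weak_convergence_iff_uniform_integrals_general Jρ mD hmD C hC μ ν hν
end

section
/- Let ℬ be a family of Borel subsets of S such that ν(∂B) = 0 for every B ∈ ℬ and every ν ∈ C, and such that for every sequence ν₁, ν₂, … in P(S) and every ν ∈ C, if ν_n(B) → ν(B) for every B ∈ ℬ then ν_n → ν weakly. If for every B ∈ ℬ the values μ_{j,ρ}(B) converge to ν_j(B) as ρ → 0 uniformly over j ∈ J(ρ) (i.e. for every ε > 0 there is ρ₀ ∈ (0,1) with |μ_{j,ρ}(B) − ν_j(B)| < ε for all ρ ∈ (0,ρ₀) and j ∈ J(ρ)), then μ_{j,ρ} converges weakly to ν_j as ρ → 0, uniformly over j ∈ J(ρ). -/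
open MeasureTheory Filter Topology


private lemma aux_seqCompact {X : Type*} [tX : TopologicalSpace X] (m : MetricSpace X)
    (h : m.toPseudoMetricSpace.toUniformSpace.toTopologicalSpace = tX)
    {C : Set X} (hC : IsCompact C) {u : ℕ → X} (hu : ∀ n, u n ∈ C) :
    ∃ x ∈ C, ∃ φ : ℕ → ℕ, StrictMono φ ∧ Tendsto (u ∘ φ) atTop (𝓝 x) := by
  subst h
  letI := m
  exact hC.isSeqCompact hu

private lemma aux_dist_tendsto {X : Type*} [tX : TopologicalSpace X] (m : MetricSpace X)
    (h : m.toPseudoMetricSpace.toUniformSpace.toTopologicalSpace = tX)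
    {u : ℕ → X} {x : X} (hu : Tendsto u atTop (𝓝 x)) :
    ∀ ε > (0 : ℝ), ∀ᶠ n in atTop, @dist _ m.toPseudoMetricSpace.toDist (u n) x < ε := by
  subst h
  letI := m
  intro ε hε
  exact Metric.tendsto_nhds.mp hu ε hε


/-- Let `ℬ` be a family of Borel subsets of `S` such that `ν (∂B) = 0` for
all `B ∈ ℬ` and `ν ∈ C`, and such that `ℬ` is convergence-determining for limits in `C`.
If `μ_{j,ρ}(B) → ν_j(B)` as `ρ → 0`, uniformly over `j ∈ J(ρ)`, for every `B ∈ ℬ`, then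
`μ_{j,ρ}` converges weakly to `ν_j` as `ρ → 0`, uniformly over `j ∈ J(ρ)`. -/
theorem uniform_weak_convergence_of_convergence_determining_family
    {S : Type*} [TopologicalSpace S] [TopologicalSpace.SeparableSpace S]
    [TopologicalSpace.MetrizableSpace S] [MeasurableSpace S] [BorelSpace S]
    {J : Type*} (Jρ : ℝ → Set J)
    (mD : MetricSpace (ProbabilityMeasure S))
    (hmD : mD.toPseudoMetricSpace.toUniformSpace.toTopologicalSpace
      = (inferInstance : TopologicalSpace (ProbabilityMeasure S)))
    (C : Set (ProbabilityMeasure S)) (hC : IsCompact C)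
    (μ : ℝ → J → ProbabilityMeasure S)
    (ν : J → ProbabilityMeasure S) (hν : ∀ j, ν j ∈ C)
    (ℬ : Set (Set S))
    (hmeas : ∀ B ∈ ℬ, MeasurableSet B)
    (hfront : ∀ B ∈ ℬ, ∀ ν' ∈ C, (ν' : Measure S) (frontier B) = 0)
    (hdet : ∀ νs : ℕ → ProbabilityMeasure S, ∀ ν' ∈ C,
      (∀ B ∈ ℬ, Tendsto (fun n => (νs n : Measure S) B) atTop (𝓝 ((ν' : Measure S) B))) →
      Tendsto νs atTop (𝓝 ν'))
    (hunif : ∀ B ∈ ℬ, ∀ ε > (0 : ℝ), ∃ ρ₀ ∈ Set.Ioo (0 : ℝ) 1,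
      ∀ ρ ∈ Set.Ioo (0 : ℝ) ρ₀, ∀ j ∈ Jρ ρ,
        |((μ ρ j : Measure S) B).toReal - ((ν j : Measure S) B).toReal| < ε) :
    ∀ ε > (0 : ℝ), ∃ ρ₀ ∈ Set.Ioo (0 : ℝ) 1, ∀ ρ ∈ Set.Ioo (0 : ℝ) ρ₀, ∀ j ∈ Jρ ρ,
      @dist _ mD.toPseudoMetricSpace.toDist (μ ρ j) (ν j) < ε := by
  intro ε hε
  by_contra hcon
  push_neg at hcon
  -- extract bad sequence
  have h12 : ∀ n : ℕ, (1 : ℝ) / (n + 2) ∈ Set.Ioo (0 : ℝ) 1 := by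
    intro n
    constructor
    · positivity
    · rw [div_lt_one (by positivity)]
      have : (0:ℝ) ≤ (n:ℝ) := Nat.cast_nonneg n
      linarith
  choose ρs hρs js hjs hd using fun n : ℕ => hcon (1 / (n + 2)) (h12 n)
  -- ρs tends to 0 fast
  have key : ∀ ρ₀ > (0:ℝ), ∀ᶠ n in atTop, ρs n ∈ Set.Ioo (0:ℝ) ρ₀ := by
    intro ρ₀ hρ₀
    obtain ⟨N, hN⟩ := exists_nat_gt (1 / ρ₀)
    filter_upwards [eventually_ge_atTop N] with n hn
    refine ⟨(hρs n).1, lt_of_lt_of_le (hρs n).2 ?_⟩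
    rw [div_le_iff₀ (by positivity)]
    have h1 : 1 / ρ₀ < (N:ℝ) := hN
    have h2 : (N:ℝ) ≤ (n:ℝ) := Nat.cast_le.mpr hn
    have h3 : 1 / ρ₀ < (n:ℝ) + 2 := by linarith
    calc (1:ℝ) = ρ₀ * (1 / ρ₀) := by field_simp
    _ ≤ ρ₀ * ((n:ℝ) + 2) := by
        apply mul_le_mul_of_nonneg_left (le_of_lt h3) (le_of_lt hρ₀)
  -- seq compactness of C
  obtain ⟨ν', hν'C, φ, hφ, hφlim⟩ :=
    aux_seqCompact mD hmD hC (u := fun n => ν (js n)) (fun n => hν (js n))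
  set μs : ℕ → ProbabilityMeasure S := fun k => μ (ρs (φ k)) (js (φ k)) with hμs
  letI : MetricSpace S := TopologicalSpace.metrizableSpaceMetric S
  -- μs converges on each B
  have hB : ∀ B ∈ ℬ, Tendsto (fun k => (μs k : Measure S) B) atTop (𝓝 ((ν' : Measure S) B)) := by
    intro B hBmem
    have h1 : Tendsto (fun k => ((ν (js (φ k)) : Measure S)) B) atTop
        (𝓝 ((ν' : Measure S) B)) :=
      ProbabilityMeasure.tendsto_measure_of_null_frontier_of_tendsto' hφlim
        (hfront B hBmem ν' hν'C)
    have h1' : Tendsto (fun k => ((ν (js (φ k)) : Measure S) B).toReal) atTop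
        (𝓝 (((ν' : Measure S) B).toReal)) :=
      (ENNReal.tendsto_toReal (measure_ne_top _ B)).comp h1
    have h2 : Tendsto (fun k => ((μs k : Measure S) B).toReal
        - ((ν (js (φ k)) : Measure S) B).toReal) atTop (𝓝 0) := by
      rw [NormedAddCommGroup.tendsto_nhds_zero]
      intro ε' hε'
      obtain ⟨ρ₀, hρ₀, hbound⟩ := hunif B hBmem ε' hε'
      filter_upwards [(hφ.tendsto_atTop).eventually (key ρ₀ hρ₀.1)] with k hk
      rw [Real.norm_eq_abs]
      exact hbound _ hk _ (hjs (φ k))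
    have h3 : Tendsto (fun k => ((μs k : Measure S) B).toReal) atTop
        (𝓝 (((ν' : Measure S) B).toReal)) := by
      have := h2.add h1'
      simpa using this
    exact (ENNReal.tendsto_toReal_iff (fun k => measure_ne_top _ B)
      (measure_ne_top _ B)).mp h3
  have hμlim : Tendsto μs atTop (𝓝 ν') := hdet μs ν' hν'C hB
  -- derive the contradiction via distances
  have e1 := aux_dist_tendsto mD hmD hμlim (ε / 2) (by linarith)
  have e2 := aux_dist_tendsto mD hmD hφlim (ε / 2) (by linarith)
  obtain ⟨k, hk1, hk2⟩ := (e1.and e2).exists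
  have htri := @dist_triangle _ mD.toPseudoMetricSpace (μs k) ν' (ν (js (φ k)))
  have hsym : @dist _ mD.toPseudoMetricSpace.toDist ν' (ν (js (φ k)))
      = @dist _ mD.toPseudoMetricSpace.toDist (ν (js (φ k))) ν' :=
    @dist_comm _ mD.toPseudoMetricSpace _ _
  have hge := hd (φ k)
  have : @dist _ mD.toPseudoMetricSpace.toDist (μs k) (ν (js (φ k))) < ε := by
    have := htri
    rw [hsym] at this
    calc @dist _ mD.toPseudoMetricSpace.toDist (μs k) (ν (js (φ k)))
        ≤ _ + _ := this
      _ < ε / 2 + ε / 2 := add_lt_add hk1 hk2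
      _ = ε := by ring
  exact absurd this (not_lt.mpr hge)
end

section
/- Let ℰ ⊆ 𝒫 have asymptotic density zero, i.e. T^{−d} #(ℰ ∩ B_T) → 0 as T → ∞, where B_T is the open ball of radius T about the origin in ℝᵈ. Then 𝗆(Σ′) = 1, where Σ′ is the closure in Σ of the set of marks {ς(q) : q ∈ 𝒫 ∖ ℰ}. -/
open MeasureTheory Set Filter Topology

/-!
If the closure `S` of the marks of `𝒫 ∖ ℰ` missed a set of positive `𝗆`-measure, it would miss a
whole ball `A ⊆ Σ` of positive measure with null frontier. Applying the uniform density condition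
to `B = B₁(0) × A` shows that a positive proportion `c · vol(B₁) · 𝗆(A)` of the points of `𝒫` in
`B_T` carry marks in `A`; but those points all lie in `ℰ`, which has density zero.
-/

theorem Metric.exists_ball_subset_measure_pos_null_frontier {X : Type*}
    [PseudoMetricSpace X] [SecondCountableTopology X] [MeasurableSpace X] [OpensMeasurableSpace X]
    (μ : Measure X) [SFinite μ] {U : Set X} (hU : IsOpen U) (hμU : μ U ≠ 0) :
    ∃ x r, Metric.ball x r ⊆ U ∧ 0 < μ (Metric.ball x r) ∧
      μ (frontier (Metric.ball x r)) = 0 := by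
  obtain ⟨x, hxU, hpos⟩ := exists_mem_forall_mem_nhdsWithin_pos_measure hμU
  obtain ⟨R, hR, hRU⟩ := Metric.isOpen_iff.mp hU x hxU
  obtain ⟨r, ⟨hr, hrR⟩, hfr⟩ := exists_null_frontier_thickening μ {x} hR
  rw [Metric.thickening_singleton] at hfr
  exact ⟨x, r, (Metric.ball_subset_ball hrR.le).trans hRU,
    hpos _ (mem_nhdsWithin_of_mem_nhds (Metric.ball_mem_nhds x hr)), hfr⟩

theorem MeasureTheory.Measure.prod_frontier_prod_eq_zero {α β : Type*} [TopologicalSpace α]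
    [TopologicalSpace β] [MeasurableSpace α] [MeasurableSpace β] {μ : Measure α} {ν : Measure β}
    [SFinite ν] {s : Set α} {t : Set β} (hs : μ (frontier s) = 0) (ht : ν (frontier t) = 0) :
    (μ.prod ν) (frontier (s ×ˢ t)) = 0 := by
  rw [frontier_prod_eq]
  refine measure_union_null ?_ ?_ <;> simp [Measure.prod_prod, hs, ht]

theorem tendsto_ncard_div_pow_zero_of_subset {α : Type*} {s t : ℝ → Set α} {d : ℕ}
    (hst : ∀ᶠ T in atTop, s T ⊆ t T) (ht : ∀ᶠ T in atTop, (t T).Finite)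
    (hlim : Tendsto (fun T => ((t T).ncard : ℝ) / T ^ d) atTop (𝓝 0)) :
    Tendsto (fun T => ((s T).ncard : ℝ) / T ^ d) atTop (𝓝 0) := by
  refine squeeze_zero' ?_ ?_ hlim
  · filter_upwards [eventually_ge_atTop 0] with T hT
    positivity
  · filter_upwards [eventually_ge_atTop 0, hst, ht] with T hT hsub hfin
    gcongr

theorem sep_inv_smul_mem_ball_prod_subset {F M : Type*} [NormedAddCommGroup F] [NormedSpace ℝ F]
    {P E : Set F} {ς : F → M} {A : Set M} (hA : Disjoint A (ς '' (P \ E))) {T : ℝ} (hT : 0 < T) :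
    {p ∈ P | (T⁻¹ • p, ς p) ∈ Metric.ball (0 : F) 1 ×ˢ A} ⊆ E ∩ Metric.ball 0 T := by
  rintro p ⟨hpP, hp1, hpA⟩
  refine ⟨?_, ?_⟩
  · by_contra hpE
    exact hA.notMem_of_mem_left hpA ⟨p, ⟨hpP, hpE⟩, rfl⟩
  · rw [mem_ball_zero_iff, norm_smul, norm_inv, Real.norm_of_nonneg hT.le] at hp1
    rw [mem_ball_zero_iff]
    rwa [inv_mul_lt_iff₀ hT, mul_one] at hp1

theorem marks_closure_full_measure_general
    (d : ℕ)
    {Mark : Type*} [MetricSpace Mark] [CompactSpace Mark] [MeasurableSpace Mark]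
    [BorelSpace Mark]
    (m : Measure Mark) [IsProbabilityMeasure m]
    (P : Set (EuclideanSpace ℝ (Fin d)))
    (hPlf : ∀ B : Set (EuclideanSpace ℝ (Fin d)), Bornology.IsBounded B → (P ∩ B).Finite)
    (ς : EuclideanSpace ℝ (Fin d) → Mark)
    (c : ℝ) (hc : 0 < c)
    (hdens : ∀ B : Set (EuclideanSpace ℝ (Fin d) × Mark), Bornology.IsBounded B →
      ((volume : Measure (EuclideanSpace ℝ (Fin d))).prod m) (frontier B) = 0 →
      Tendsto (fun T : ℝ =>
          (({p ∈ P | (T⁻¹ • p, ς p) ∈ B}).ncard : ℝ) / T ^ d)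
        atTop
        (𝓝 (c * (((volume : Measure (EuclideanSpace ℝ (Fin d))).prod m) B).toReal)))
    (E : Set (EuclideanSpace ℝ (Fin d))) (hEP : E ⊆ P)
    (hEdens : Tendsto (fun T : ℝ => ((E ∩ Metric.ball 0 T).ncard : ℝ) / T ^ d)
      atTop (𝓝 0)) :
    m (closure (ς '' (P \ E))) = 1 := by
  by_contra hne
  have hcompl : m (closure (ς '' (P \ E)))ᶜ ≠ 0 :=
    mt (prob_compl_eq_zero_iff isClosed_closure.measurableSet).mp hne
  obtain ⟨x, r, hAS, hApos, hAfr⟩ :=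
    Metric.exists_ball_subset_measure_pos_null_frontier m
      isClosed_closure.isOpen_compl hcompl
  set B := Metric.ball (0 : EuclideanSpace ℝ (Fin d)) 1 ×ˢ Metric.ball x r
  have hBfr : (volume.prod m) (frontier B) = 0 :=
    Measure.prod_frontier_prod_eq_zero
      (by rw [frontier_ball _ one_ne_zero]; exact Measure.addHaar_sphere_of_ne_zero _ _ one_ne_zero)
      hAfr
  have hBpos : 0 < c * ((volume.prod m) B).toReal := by
    rw [Measure.prod_prod]
    exact mul_pos hc (ENNReal.toReal_pos
      (mul_ne_zero (Metric.measure_ball_pos _ _ one_pos).ne' hApos.ne')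
      (ENNReal.mul_ne_top measure_ball_lt_top.ne (measure_ne_top m _)))
  have hdisj : Disjoint (Metric.ball x r) (ς '' (P \ E)) :=
    (disjoint_compl_left_iff_subset.mpr subset_closure).mono_left hAS
  have hzero := tendsto_ncard_div_pow_zero_of_subset
    (s := fun T => {p ∈ P | (T⁻¹ • p, ς p) ∈ B})
    ((eventually_gt_atTop 0).mono fun T hT => sep_inv_smul_mem_ball_prod_subset hdisj hT)
    (.of_forall fun T => (hPlf _ Metric.isBounded_ball).subset (inter_subset_inter_left _ hEP))
    hEdens
  exact hBpos.ne' (tendsto_nhds_unique (hdens B (Metric.isBounded_ball.prod Metric.isBounded_ball)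
    hBfr) hzero)

/-- In the setting of the uniform density condition for the marked point set
`𝒫̃`, if `ℰ ⊆ 𝒫` has asymptotic density zero, then the closure `Σ′` in `Σ` of the set of marks
of points of `𝒫 ∖ ℰ` has full measure: `𝗆(Σ′) = 1`. -/
theorem marks_closure_full_measure
    (d : ℕ) (hd : 2 ≤ d)
    {Mark : Type*} [MetricSpace Mark] [CompactSpace Mark] [MeasurableSpace Mark]
    [BorelSpace Mark]
    (m : Measure Mark) [IsProbabilityMeasure m]
    (P : Set (EuclideanSpace ℝ (Fin d)))
    (hPlf : ∀ B : Set (EuclideanSpace ℝ (Fin d)), Bornology.IsBounded B → (P ∩ B).Finite)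
    (ς : EuclideanSpace ℝ (Fin d) → Mark)
    (c : ℝ) (hc : 0 < c)
    (hdens : ∀ B : Set (EuclideanSpace ℝ (Fin d) × Mark), Bornology.IsBounded B →
      ((volume : Measure (EuclideanSpace ℝ (Fin d))).prod m) (frontier B) = 0 →
      Tendsto (fun T : ℝ =>
          (({p ∈ P | (T⁻¹ • p, ς p) ∈ B}).ncard : ℝ) / T ^ d)
        atTop
        (𝓝 (c * (((volume : Measure (EuclideanSpace ℝ (Fin d))).prod m) B).toReal)))
    (E : Set (EuclideanSpace ℝ (Fin d))) (hEP : E ⊆ P)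
    (hEdens : Tendsto (fun T : ℝ => ((E ∩ Metric.ball 0 T).ncard : ℝ) / T ^ d)
      atTop (𝓝 0)) :
    m (closure (ς '' (P \ E))) = 1 :=
  marks_closure_full_measure_general d m P hPlf ς c hc hdens E hEP hEdens
end

section
/- If 4Kρ^{1−γ} ≤ φ(v,v′) ≤ π/2, then (B D_ρ^{−1} R_v^{−1}) ∩ (B D_ρ^{−1} R_{v′}^{−1}) ⊆ 𝔹_{ρ^γ}^d; that is, every point lying in the image of B under both affine-linear maps x ↦ x D_ρ^{−1} R_v^{−1} and x ↦ x D_ρ^{−1} R_{v′}^{−1} has Euclidean norm strictly less than ρ^γ. -/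
open Metric Set

noncomputable section

/-- The first standard basis (row) vector `e₁ = (1,0,…,0)` in `ℝᵈ`. -/
def e1 (d : ℕ) : EuclideanSpace ℝ (Fin d) :=
  WithLp.toLp 2 fun i => if (i : ℕ) = 0 then 1 else 0

/-- The linear map `x ↦ x D_ρ⁻¹` given by right multiplication with the inverse of the
diagonal matrix `D_ρ = diag(ρ^{d-1}, ρ^{-1}, …, ρ^{-1})`; explicitly it rescales the first
coordinate by `ρ^{1-d}` and the remaining coordinates by `ρ`. -/
def DinvMul (d : ℕ) (ρ : ℝ) (x : EuclideanSpace ℝ (Fin d)) : EuclideanSpace ℝ (Fin d) :=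
  WithLp.toLp 2 fun i => if (i : ℕ) = 0 then ρ ^ ((1 : ℤ) - (d : ℤ)) * x i else ρ * x i

/-!
`D_ρ⁻¹` only stretches the `e₁`-direction, so after the rotation `R_v⁻¹` every point of
`B D_ρ⁻¹ R_v⁻¹` lies within `ρK` of the line `ℝv`. A point `y` of the intersection is thus
within `ρK` of two lines at angle `φ`, which forces its component `a` along `v` to satisfy
`|a| sin φ ≤ 2ρK`. Jordan's inequality `sin φ ≥ 2φ/π` and `φ ≥ 4Kρ^{1-γ}` give
`|a| ≤ (π/4) ρ^γ`, while the distance to the line is `ρK ≤ (π/8) ρ^γ`; since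
`π²/16 + π²/64 < 1`, this gives `‖y‖ < ρ^γ`.
-/

open RealInnerProductSpace InnerProductGeometry

section UnitVectors

variable {E : Type*} [NormedAddCommGroup E] [InnerProductSpace ℝ E] {v v' : E}

lemma norm_sq_eq_inner_sq_add_norm_sub_inner_smul_sq (hv : ‖v‖ = 1) (y : E) :
    ‖y‖ ^ 2 = ⟪y, v⟫ ^ 2 + ‖y - ⟪y, v⟫ • v‖ ^ 2 := by
  rw [norm_sub_sq_real, real_inner_smul_right, norm_smul, Real.norm_eq_abs, hv, mul_one,
    sq_abs]
  ring

lemma abs_mul_sin_angle_le_norm_smul_sub_smul (hv : ‖v‖ = 1) (hv' : ‖v'‖ = 1) (a b : ℝ) :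
    |a| * Real.sin (angle v v') ≤ ‖a • v - b • v'‖ := by
  have hsin : Real.sin (angle v v') ^ 2 = 1 - ⟪v, v'⟫ ^ 2 := by
    rw [Real.sin_sq, cos_angle, hv, hv', one_mul, div_one]
  have hnorm : ‖a • v - b • v'‖ ^ 2 = a ^ 2 - 2 * a * b * ⟪v, v'⟫ + b ^ 2 := by
    rw [norm_sub_sq_real, real_inner_smul_left, real_inner_smul_right, norm_smul, norm_smul,
      Real.norm_eq_abs, Real.norm_eq_abs, hv, hv', mul_one, mul_one, sq_abs, sq_abs]
    ring
  refine le_of_pow_le_pow_left₀ two_ne_zero (norm_nonneg _) ?_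
  rw [mul_pow, sq_abs, hsin, hnorm]
  nlinarith [sq_nonneg (b - a * ⟪v, v'⟫)]

lemma abs_inner_mul_sin_angle_le (hv : ‖v‖ = 1) (hv' : ‖v'‖ = 1) (y : E) :
    |⟪y, v⟫| * Real.sin (angle v v') ≤ ‖y - ⟪y, v⟫ • v‖ + ‖y - ⟪y, v'⟫ • v'‖ :=
  calc |⟪y, v⟫| * Real.sin (angle v v') ≤ ‖⟪y, v⟫ • v - ⟪y, v'⟫ • v'‖ :=
        abs_mul_sin_angle_le_norm_smul_sub_smul hv hv' _ _
    _ = ‖(y - ⟪y, v'⟫ • v') - (y - ⟪y, v⟫ • v)‖ := by congr 1; abel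
    _ ≤ ‖y - ⟪y, v⟫ • v‖ + ‖y - ⟪y, v'⟫ • v'‖ := by rw [add_comm]; exact norm_sub_le _ _

lemma norm_lt_of_near_two_lines (hv : ‖v‖ = 1) (hv' : ‖v'‖ = 1) {u t : ℝ} (hu : 0 < u)
    (ht : 0 < t) (hlow : 4 * u ≤ angle v v') (hupp : angle v v' ≤ Real.pi / 2) {y : E}
    (hy : ‖y - ⟪y, v⟫ • v‖ ≤ u * t) (hy' : ‖y - ⟪y, v'⟫ • v'‖ ≤ u * t) : ‖y‖ < t := by
  have hπ := Real.pi_pos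
  have hsin : 8 * u / Real.pi ≤ Real.sin (angle v v') :=
    calc 8 * u / Real.pi = 2 / Real.pi * (4 * u) := by ring
      _ ≤ 2 / Real.pi * angle v v' := by gcongr
      _ ≤ Real.sin (angle v v') := Real.mul_le_sin (angle_nonneg v v') hupp
  have hinner : |⟪y, v⟫| ≤ Real.pi / 4 * t := by
    have h := (mul_le_mul_of_nonneg_left hsin (abs_nonneg ⟪y, v⟫)).trans
      ((abs_inner_mul_sin_angle_le hv hv' y).trans (add_le_add hy hy'))
    rw [mul_div_assoc', div_le_iff₀ hπ] at h
    nlinarith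
  have horth : ‖y - ⟪y, v⟫ • v‖ ≤ Real.pi / 8 * t := hy.trans (by gcongr; linarith)
  have hπsq : Real.pi ^ 2 < 64 / 5 := by nlinarith [Real.pi_lt_d2]
  refine lt_of_pow_lt_pow_left₀ 2 ht.le ?_
  rw [norm_sq_eq_inner_sq_add_norm_sub_inner_smul_sq hv, ← sq_abs]
  calc |⟪y, v⟫| ^ 2 + ‖y - ⟪y, v⟫ • v‖ ^ 2 ≤ (Real.pi / 4 * t) ^ 2 + (Real.pi / 8 * t) ^ 2 := by
        gcongr
    _ = 5 * Real.pi ^ 2 / 64 * t ^ 2 := by ring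
    _ < 1 * t ^ 2 := by gcongr; linarith
    _ = t ^ 2 := one_mul _

end UnitVectors

lemma LinearIsometryEquiv.norm_symm_sub_inner_smul {E F : Type*} [NormedAddCommGroup E]
    [InnerProductSpace ℝ E] [NormedAddCommGroup F] [InnerProductSpace ℝ F] (R : E ≃ₗᵢ[ℝ] F)
    (z : F) (v : E) : ‖R.symm z - ⟪R.symm z, v⟫ • v‖ = ‖z - ⟪z, R v⟫ • R v‖ := by
  rw [← R.norm_map, map_sub, map_smul, R.apply_symm_apply, ← R.inner_map_map,
    R.apply_symm_apply]

lemma inner_e1_eq_apply {d : ℕ} (z : EuclideanSpace ℝ (Fin d)) {i : Fin d}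
    (hi : (i : ℕ) = 0) : ⟪z, e1 d⟫ = z i := by
  rw [PiLp.inner_apply, Finset.sum_eq_single i]
  · simp [e1, hi]
  · intro j _ hj
    have hj0 : (j : ℕ) ≠ 0 := fun h => hj (Fin.ext (h.trans hi.symm))
    simp [e1, hj0]
  · simp

lemma norm_dinvMul_sub_inner_e1_smul_le (d : ℕ) (ρ : ℝ) (x : EuclideanSpace ℝ (Fin d)) :
    ‖DinvMul d ρ x - ⟪DinvMul d ρ x, e1 d⟫ • e1 d‖ ≤ |ρ| * ‖x‖ := by
  rw [← Real.norm_eq_abs, ← norm_smul, EuclideanSpace.norm_eq, EuclideanSpace.norm_eq]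
  refine Real.sqrt_le_sqrt (Finset.sum_le_sum fun i _ => ?_)
  by_cases hi : (i : ℕ) = 0
  · rw [PiLp.sub_apply, PiLp.smul_apply, ← inner_e1_eq_apply _ hi]
    simp [e1, hi, sq_nonneg]
  · simp [DinvMul, e1, hi]

lemma norm_symm_dinvMul_sub_inner_smul_le {d : ℕ} (ρ : ℝ) {v : EuclideanSpace ℝ (Fin d)}
    (R : EuclideanSpace ℝ (Fin d) ≃ₗᵢ[ℝ] EuclideanSpace ℝ (Fin d)) (hRv : R v = e1 d)
    (x : EuclideanSpace ℝ (Fin d)) :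
    ‖R.symm (DinvMul d ρ x) - ⟪R.symm (DinvMul d ρ x), v⟫ • v‖ ≤ |ρ| * ‖x‖ := by
  rw [R.norm_symm_sub_inner_smul, hRv]
  exact norm_dinvMul_sub_inner_e1_smul_le d ρ x

theorem intersection_of_stretched_images_in_small_ball_general
    (d : ℕ) (K : ℝ)
    (B : Set (EuclideanSpace ℝ (Fin d))) (hB : B ⊆ Metric.ball 0 K)
    (γ ρ : ℝ) (hρ : ρ ∈ Set.Ioo (0 : ℝ) 1)
    (v v' : EuclideanSpace ℝ (Fin d)) (hv : ‖v‖ = 1) (hv' : ‖v'‖ = 1)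
    (R R' : EuclideanSpace ℝ (Fin d) ≃ₗᵢ[ℝ] EuclideanSpace ℝ (Fin d))
    (hRv : R v = e1 d) (hR'v' : R' v' = e1 d)
    (hlow : 4 * K * ρ ^ (1 - γ) ≤ InnerProductGeometry.angle v v')
    (hupp : InnerProductGeometry.angle v v' ≤ Real.pi / 2) :
    (R.symm '' (DinvMul d ρ '' B)) ∩ (R'.symm '' (DinvMul d ρ '' B))
      ⊆ Metric.ball 0 (ρ ^ γ) := by
  have hρ0 : 0 < ρ := hρ.1
  rintro y ⟨⟨_, ⟨x, hxB, rfl⟩, rfl⟩, ⟨_, ⟨x', hx'B, rfl⟩, hyx'⟩⟩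
  have hx : ‖x‖ < K := mem_ball_zero_iff.mp (hB hxB)
  have hx' : ‖x'‖ < K := mem_ball_zero_iff.mp (hB hx'B)
  have hρK : ρ * K = K * ρ ^ (1 - γ) * ρ ^ γ := by
    rw [mul_assoc, ← Real.rpow_add hρ0, sub_add_cancel, Real.rpow_one, mul_comm]
  have hnear : ∀ (S : EuclideanSpace ℝ (Fin d) ≃ₗᵢ[ℝ] EuclideanSpace ℝ (Fin d)) w z,
      S w = e1 d → ‖z‖ < K →
        ‖S.symm (DinvMul d ρ z) - ⟪S.symm (DinvMul d ρ z), w⟫ • w‖ ≤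
          K * ρ ^ (1 - γ) * ρ ^ γ := fun S w z hSw hz => by
    rw [← hρK]
    exact (norm_symm_dinvMul_sub_inner_smul_le ρ S hSw z).trans
      (by rw [abs_of_pos hρ0]; gcongr)
  refine mem_ball_zero_iff.mpr (norm_lt_of_near_two_lines hv hv' ?_ (by positivity)
    (by linarith) hupp (hnear R v x hRv hx) (hyx' ▸ hnear R' v' x' hR'v' hx'))
  have hK : 0 < K := (norm_nonneg x).trans_lt hx
  positivity

/-- If `4 K ρ^{1-γ} ≤ φ(v,v') ≤ π/2` then
`(B D_ρ⁻¹ R_v⁻¹) ∩ (B D_ρ⁻¹ R_{v'}⁻¹) ⊆ 𝔹_{ρ^γ}^d`; here `R_v, R_{v'} ∈ SO(d)` (encoded as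
linear isometries of determinant one) satisfy `v R_v = e₁`, `v' R_{v'} = e₁`, and
`B ⊆ 𝔹_K^d`. -/
theorem intersection_of_stretched_images_in_small_ball
    (d : ℕ) (hd : 2 ≤ d) (K : ℝ) (hK : 0 < K)
    (B : Set (EuclideanSpace ℝ (Fin d))) (hB : B ⊆ Metric.ball 0 K)
    (γ ρ : ℝ) (hγ : γ ∈ Set.Ioo (0 : ℝ) 1) (hρ : ρ ∈ Set.Ioo (0 : ℝ) 1)
    (v v' : EuclideanSpace ℝ (Fin d)) (hv : ‖v‖ = 1) (hv' : ‖v'‖ = 1)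
    (R R' : EuclideanSpace ℝ (Fin d) ≃ₗᵢ[ℝ] EuclideanSpace ℝ (Fin d))
    (hRdet : LinearMap.det (R.toLinearEquiv : EuclideanSpace ℝ (Fin d) →ₗ[ℝ]
      EuclideanSpace ℝ (Fin d)) = 1)
    (hR'det : LinearMap.det (R'.toLinearEquiv : EuclideanSpace ℝ (Fin d) →ₗ[ℝ]
      EuclideanSpace ℝ (Fin d)) = 1)
    (hRv : R v = e1 d) (hR'v' : R' v' = e1 d)
    (hlow : 4 * K * ρ ^ (1 - γ) ≤ InnerProductGeometry.angle v v')
    (hupp : InnerProductGeometry.angle v v' ≤ Real.pi / 2) :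
    (R.symm '' (DinvMul d ρ '' B)) ∩ (R'.symm '' (DinvMul d ρ '' B))
      ⊆ Metric.ball 0 (ρ ^ γ) :=
  intersection_of_stretched_images_in_small_ball_general d K B hB γ ρ hρ v v' hv hv' R R' hRv hR'v'
    hlow hupp

end
end
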